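/- Let u ∈ C^∞(𝕋^d) with zero average, and T_n(z) = ∫_{B(z,1/(2n))} u(y) dy (ℓ^∞-ball). Let 𝒯_n : ℤ_n^d → ℝ, 𝒯_n(z) = T_n(z/n), with discrete Fourier transform 𝒯̂_n(z) = n^{-d} ∑_{y ∈ ℤ_n^d} 𝒯_n(y) e^{−2πi z·y/n}. Then for n large enough there is a constant M = M(d,u) with n^d ∑_{z ∈ ℤ_n^d} |𝒯̂_n(z)| ≤ M. -/

import Mathlib

open Real Finset MeasureTheory
noncomputable section

/-- The discrete torus `ℤ_n^d = ([−n/2, n/2] ∩ ℤ)^d` as a finset of `ℤ^d`. -/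
def discTorus (d n : ℕ) : Finset (Fin d → ℤ) :=
  Finset.Icc (fun _ => -((n : ℤ) / 2)) (fun _ => (n : ℤ) / 2)

/-- `T_n(z) = ∫_{B(z, 1/(2n))} u(y) dy`, where `B` is the ℓ^∞-ball. -/
def ballAvg {d : ℕ} (u : (Fin d → ℝ) → ℝ) (n : ℕ) (z : Fin d → ℝ) : ℝ :=
  ∫ y in Metric.closedBall z (1 / (2 * n)), u y

/-- The discrete Fourier transform of `𝒯_n(y) = T_n(y/n)` on `ℤ_n^d`:
`𝒯̂_n(z) = n^{-d} ∑_y 𝒯_n(y) e^{−2πi z·y/n}`. -/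
def dftBallAvg {d : ℕ} (u : (Fin d → ℝ) → ℝ) (n : ℕ) (z : Fin d → ℤ) : ℂ :=
  ((n : ℂ) ^ d)⁻¹ * ∑ y ∈ discTorus d n, (ballAvg u n (fun i => (y i : ℝ) / n) : ℂ) *
    Complex.exp (-(2 * π * Complex.I) * (∑ i, (z i : ℝ) * (y i : ℝ)) / n)

namespace Stmt12

variable {d : ℕ}

/-- the `i`-th real unit vector -/
def uv (d : ℕ) (i : Fin d) : Fin d → ℝ := fun j => if j = i then 1 else 0

lemma norm_uv_le (i : Fin d) : ‖uv d i‖ ≤ 1 := by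
  apply (pi_norm_le_iff_of_nonneg zero_le_one).2
  intro j
  simp only [uv]
  split <;> simp

section E

variable {E : Type} [NormedAddCommGroup E] [NormedSpace ℝ E]

/-- iterated forward difference with step `1/n` in the listed directions -/
def dl (n : ℕ) : List (Fin d) → ((Fin d → ℝ) → E) → ((Fin d → ℝ) → E)
  | [], f => f
  | i :: t, f => fun x => dl n t f (x + (n : ℝ)⁻¹ • uv d i) - dl n t f x

lemma dl_shift (n : ℕ) (l : List (Fin d)) (f : (Fin d → ℝ) → E) (c : Fin d → ℝ)
    (hc : ∀ x, f (x + c) = f x) : ∀ x, dl n l f (x + c) = dl n l f x := by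
  induction l with
  | nil => exact hc
  | cons i t ih =>
    intro x
    simp only [dl]
    rw [add_right_comm, ih, ih]

lemma dl_contDiff (n : ℕ) (l : List (Fin d)) (f : (Fin d → ℝ) → E)
    (hf : ContDiff ℝ (⊤ : ℕ∞) f) : ContDiff ℝ (⊤ : ℕ∞) (dl n l f) := by
  induction l with
  | nil => exact hf
  | cons i t ih =>
    exact (ih.comp (contDiff_id.add contDiff_const)).sub ih

lemma dl_fderiv (n : ℕ) (l : List (Fin d)) (f : (Fin d → ℝ) → E)
    (hf : ContDiff ℝ (⊤ : ℕ∞) f) (x : Fin d → ℝ) :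
    fderiv ℝ (dl n l f) x = dl n l (fderiv ℝ f) x := by
  induction l generalizing x with
  | nil => rfl
  | cons i t ih =>
    have hdiff : Differentiable ℝ (dl n t f) :=
      (dl_contDiff n t f hf).differentiable (by simp)
    have h1 : HasFDerivAt (fun x => dl n t f (x + (n : ℝ)⁻¹ • uv d i))
        (fderiv ℝ (dl n t f) (x + (n : ℝ)⁻¹ • uv d i)) x := by
      have := (hdiff (x + (n : ℝ)⁻¹ • uv d i)).hasFDerivAt.comp x
        ((hasFDerivAt_id x).add_const ((n : ℝ)⁻¹ • uv d i))
      simpa [Function.comp_def] using this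
    have h2 : HasFDerivAt (dl n (i :: t) f)
        (fderiv ℝ (dl n t f) (x + (n : ℝ)⁻¹ • uv d i) - fderiv ℝ (dl n t f) x) x :=
      h1.sub (hdiff x).hasFDerivAt
    rw [h2.fderiv]
    simp only [dl]
    rw [ih, ih]

/-- periodicity predicate -/
def PerR (f : (Fin d → ℝ) → E) : Prop := ∀ (x : Fin d → ℝ) (i : Fin d), f (x + uv d i) = f x

lemma per_vec (f : (Fin d → ℝ) → E) (hper : PerR f) :
    ∀ (v : Fin d → ℤ) (x : Fin d → ℝ), f (x + fun i => (v i : ℝ)) = f x := by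
  suffices H : ∀ (N : ℕ) (v : Fin d → ℤ), (∑ i, (v i).natAbs) ≤ N →
      ∀ x, f (x + fun i => (v i : ℝ)) = f x by
    intro v x
    exact H (∑ i, (v i).natAbs) v le_rfl x
  intro N
  induction N with
  | zero =>
    intro v hv x
    have h0 : ∀ i, v i = 0 := by
      intro i
      have h := Finset.single_le_sum (f := fun i => (v i).natAbs) (fun j _ => Nat.zero_le _)
        (Finset.mem_univ i)
      omega
    have : (fun i => ((v i : ℝ))) = (0 : Fin d → ℝ) := by
      funext i; rw [h0 i]; simp
    rw [this, add_zero]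
  | succ N ih =>
    intro v hv x
    by_cases h0 : ∀ i, v i = 0
    · have : (fun i => ((v i : ℝ))) = (0 : Fin d → ℝ) := by
        funext i; rw [h0 i]; simp
      rw [this, add_zero]
    · push_neg at h0
      obtain ⟨i, hi⟩ := h0
      have hsum : ∀ w : Fin d → ℤ, ∑ j, (w j).natAbs
          = (w i).natAbs + ∑ j ∈ univ.erase i, (w j).natAbs := by
        intro w
        rw [← Finset.add_sum_erase _ _ (Finset.mem_univ i)]
      rcases lt_or_gt_of_ne hi with hneg | hpos
      · -- v i < 0 : use v' = update v i (v i + 1)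
        set v' := Function.update v i (v i + 1) with hv'
        have hkey : x + (fun j => ((v' j : ℝ))) = (x + fun j => ((v j : ℝ))) + uv d i := by
          funext j
          by_cases hj : j = i
          · subst hj
            simp [hv', uv, Function.update_self]
            push_cast
            ring
          · simp [hv', uv, Function.update_of_ne hj, hj]
        have hb : ∑ j, (v' j).natAbs ≤ N := by
          have e1 := hsum v
          have e2 := hsum v'
          have he : ∑ j ∈ univ.erase i, (v' j).natAbs = ∑ j ∈ univ.erase i, (v j).natAbs := by
            apply Finset.sum_congr rfl
            intro j hj
            rw [hv', Function.update_of_ne (Finset.ne_of_mem_erase hj)]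
          rw [he] at e2
          have : (v' i) = v i + 1 := by rw [hv', Function.update_self]
          omega
        have := ih v' hb x
        rw [hkey, hper (x + fun j => ((v j : ℝ))) i] at this
        exact this
      · set v' := Function.update v i (v i - 1) with hv'
        have hkey : x + (fun j => ((v j : ℝ))) = (x + fun j => ((v' j : ℝ))) + uv d i := by
          funext j
          by_cases hj : j = i
          · subst hj
            simp [hv', uv, Function.update_self]
            push_cast
            ring
          · simp [hv', uv, Function.update_of_ne hj, hj]
        have hb : ∑ j, (v' j).natAbs ≤ N := by
          have e1 := hsum v
          have e2 := hsum v'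
          have he : ∑ j ∈ univ.erase i, (v' j).natAbs = ∑ j ∈ univ.erase i, (v j).natAbs := by
            apply Finset.sum_congr rfl
            intro j hj
            rw [hv', Function.update_of_ne (Finset.ne_of_mem_erase hj)]
          rw [he] at e2
          have : (v' i) = v i - 1 := by rw [hv', Function.update_self]
          omega
        rw [hkey, hper (x + fun j => ((v' j : ℝ))) i]
        exact ih v' hb x

lemma bounded_of_per (f : (Fin d → ℝ) → E) (hc : Continuous f) (hper : PerR f) :
    ∃ C : ℝ, 0 ≤ C ∧ ∀ x, ‖f x‖ ≤ C := by
  obtain ⟨C, hC⟩ := (isCompact_Icc (a := (0 : Fin d → ℝ)) (b := 1)).exists_bound_of_continuousOn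
    hc.continuousOn
  refine ⟨max C 0, le_max_right _ _, fun x => ?_⟩
  have hx : f x = f (x + fun i => ((-⌊x i⌋ : ℤ) : ℝ)) := (per_vec f hper _ x).symm
  have hmem : (x + fun i => ((-⌊x i⌋ : ℤ) : ℝ)) ∈ Set.Icc (0 : Fin d → ℝ) 1 := by
    constructor <;> intro i
    · have := Int.fract_nonneg (x i)
      simp only [Pi.add_apply, Pi.zero_apply]
      push_cast
      rw [show x i + -(⌊x i⌋ : ℝ) = Int.fract (x i) from by rw [Int.fract]; ring]
      exact this
    · have := (Int.fract_lt_one (x i)).le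
      simp only [Pi.add_apply, Pi.one_apply]
      push_cast
      rw [show x i + -(⌊x i⌋ : ℝ) = Int.fract (x i) from by rw [Int.fract]; ring]
      exact this
  rw [hx]
  exact le_max_of_le_left (hC _ hmem)

end E

/-- main finite-difference bound: `k`-fold differences of a smooth periodic function
decay like `n^{-k}`, uniformly. -/
lemma diff_bound (d : ℕ) : ∀ (k : ℕ) (E : Type) [NormedAddCommGroup E]
    [NormedSpace ℝ E] (f : (Fin d → ℝ) → E), ContDiff ℝ (⊤ : ℕ∞) f → PerR f →
    ∃ C : ℝ, 0 ≤ C ∧ ∀ (n : ℕ), 1 ≤ n → ∀ (l : List (Fin d)), l.length = k →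
      ∀ x, ‖dl n l f x‖ ≤ C / (n : ℝ) ^ k := by
  intro k
  induction k with
  | zero =>
    intro E _ _ f hf hper
    obtain ⟨C, hC0, hC⟩ := bounded_of_per f hf.continuous hper
    refine ⟨C, hC0, fun n hn l hl x => ?_⟩
    rw [List.length_eq_zero_iff] at hl
    subst hl
    simpa [dl] using hC x
  | succ k ih =>
    intro E _ _ f hf hper
    have hf' : ContDiff ℝ (⊤ : ℕ∞) (fderiv ℝ f) := hf.fderiv_right (by simp)
    have hper' : PerR (fderiv ℝ f) := by
      intro x i
      have hfun : (fun y => f (y + uv d i)) = f := funext fun y => hper y i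
      have : fderiv ℝ (fun y => f (y + uv d i)) x = fderiv ℝ f (x + uv d i) := by
        have h1 : HasFDerivAt (fun y => f (y + uv d i)) (fderiv ℝ f (x + uv d i)) x := by
          have := ((hf.differentiable (by simp)) (x + uv d i)).hasFDerivAt.comp x
            ((hasFDerivAt_id x).add_const (uv d i))
          simpa [Function.comp_def] using this
        exact h1.fderiv
      rw [← this, hfun]
    obtain ⟨C, hC0, hC⟩ := ih ((Fin d → ℝ) →L[ℝ] E) (fderiv ℝ f) hf' hper'
    refine ⟨C, hC0, fun n hn l hl x => ?_⟩
    rcases l with _ | ⟨i, t⟩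
    · simp at hl
    · have htlen : t.length = k := by simpa using hl
      have hn0 : (0 : ℝ) < (n : ℝ) := by positivity
      have hdiff : Differentiable ℝ (dl n t f) := (dl_contDiff n t f hf).differentiable (by simp)
      have hbound : ∀ y, ‖fderiv ℝ (dl n t f) y‖ ≤ C / (n : ℝ) ^ k := by
        intro y
        rw [dl_fderiv n t f hf y]
        exact hC n hn t htlen y
      have hmvt := Convex.norm_image_sub_le_of_norm_fderiv_le
        (fun y _ => hdiff y) (fun y _ => hbound y) convex_univ
        (Set.mem_univ x) (Set.mem_univ (x + (n : ℝ)⁻¹ • uv d i))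
      simp only [dl]
      refine hmvt.trans ?_
      have hnorm : ‖x + (n : ℝ)⁻¹ • uv d i - x‖ ≤ (n : ℝ)⁻¹ := by
        rw [add_sub_cancel_left, norm_smul]
        simp only [norm_inv, Real.norm_natCast]
        calc (n : ℝ)⁻¹ * ‖uv d i‖ ≤ (n : ℝ)⁻¹ * 1 := by
              exact mul_le_mul_of_nonneg_left (norm_uv_le i) (by positivity)
          _ = (n : ℝ)⁻¹ := mul_one _
      calc C / (n : ℝ) ^ k * ‖x + (n : ℝ)⁻¹ • uv d i - x‖
          ≤ C / (n : ℝ) ^ k * (n : ℝ)⁻¹ :=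
            mul_le_mul_of_nonneg_left hnorm (by positivity)
        _ = C / (n : ℝ) ^ (k + 1) := by
            rw [pow_succ]
            field_simp
end Stmt12

namespace Stmt12

variable {d : ℕ}

lemma ballAvg_shift (g : (Fin d → ℝ) → ℝ) (n : ℕ) (x c : Fin d → ℝ) :
    ballAvg g n (x + c) = ballAvg (fun y => g (y + c)) n x := by
  unfold ballAvg
  rw [← MeasureTheory.integral_indicator (Metric.isClosed_closedBall.measurableSet),
    ← MeasureTheory.integral_indicator (Metric.isClosed_closedBall.measurableSet),
    ← MeasureTheory.integral_add_right_eq_self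
      (fun y => (Metric.closedBall (x + c) (1 / (2 * (n:ℝ)))).indicator g y) c]
  congr 1
  funext y
  have hmem : y + c ∈ Metric.closedBall (x + c) (1 / (2 * (n:ℝ)))
      ↔ y ∈ Metric.closedBall x (1 / (2 * (n:ℝ))) := by
    simp [Metric.mem_closedBall, dist_add_right]
  by_cases h : y ∈ Metric.closedBall x (1 / (2 * (n:ℝ)))
  · rw [Set.indicator_of_mem (hmem.2 h), Set.indicator_of_mem h]
  · rw [Set.indicator_of_notMem (fun hc => h (hmem.1 hc)), Set.indicator_of_notMem h]

lemma ballAvg_sub (g₁ g₂ : (Fin d → ℝ) → ℝ) (h₁ : Continuous g₁) (h₂ : Continuous g₂)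
    (n : ℕ) (x : Fin d → ℝ) :
    ballAvg (fun y => g₁ y - g₂ y) n x = ballAvg g₁ n x - ballAvg g₂ n x :=
  MeasureTheory.integral_sub
    (h₁.continuousOn.integrableOn_compact (isCompact_closedBall _ _))
    (h₂.continuousOn.integrableOn_compact (isCompact_closedBall _ _))

lemma ballAvg_bound (g : (Fin d → ℝ) → ℝ) (hg : Continuous g) (C : ℝ)
    (hC : ∀ y, ‖g y‖ ≤ C) (n : ℕ) (hn : 1 ≤ n) (x : Fin d → ℝ) :
    ‖ballAvg g n x‖ ≤ C * ((n : ℝ)⁻¹) ^ d := by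
  have hr : (0:ℝ) ≤ 1 / (2 * (n:ℝ)) := by positivity
  have hvol : MeasureTheory.volume (Metric.closedBall x (1 / (2 * (n:ℝ))))
      = ENNReal.ofReal (((n:ℝ)⁻¹) ^ d) := by
    rw [Real.volume_pi_closedBall x hr]
    congr 1
    rw [Fintype.card_fin]
    congr 1
    have hn0 : (n:ℝ) ≠ 0 := by positivity
    field_simp
  have hlt : MeasureTheory.volume (Metric.closedBall x (1 / (2 * (n:ℝ)))) < ⊤ := by
    rw [hvol]; exact ENNReal.ofReal_lt_top
  have := MeasureTheory.norm_setIntegral_le_of_norm_le_const hlt (fun y _ => hC y)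
  refine this.trans ?_
  rw [Measure.real, hvol, ENNReal.toReal_ofReal (by positivity)]

end Stmt12

namespace Stmt12

variable {d : ℕ}

def evZ (d : ℕ) (i : Fin d) : Fin d → ℤ := fun j => if j = i then 1 else 0
def pvZ (d n : ℕ) (i : Fin d) : Fin d → ℤ := fun j => if j = i then (n : ℤ) else 0

def dzl (d : ℕ) : List (Fin d) → ((Fin d → ℤ) → ℂ) → ((Fin d → ℤ) → ℂ)
  | [], f => f
  | i :: t, f => fun y => dzl d t f (y + evZ d i) - dzl d t f y

def PerZ (n : ℕ) (f : (Fin d → ℤ) → ℂ) : Prop := ∀ y i, f (y + pvZ d n i) = f y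

lemma dzl_perZ (n : ℕ) (l : List (Fin d)) (f : (Fin d → ℤ) → ℂ) (hf : PerZ n f) :
    PerZ n (dzl d l f) := by
  induction l with
  | nil => exact hf
  | cons i t ih =>
    intro y j
    simp only [dzl]
    rw [add_right_comm, ih y j, ih]

lemma dzl_append (l : List (Fin d)) (i : Fin d) (f : (Fin d → ℤ) → ℂ) :
    dzl d (l ++ [i]) f = dzl d l (fun y => f (y + evZ d i) - f y) := by
  induction l with
  | nil => rfl
  | cons j t ih =>
    show dzl d (j :: (t ++ [i])) f = _
    funext y
    show dzl d (t ++ [i]) f (y + evZ d j) - dzl d (t ++ [i]) f y = _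
    rw [ih]
    rfl

/-- the exponential factor, matching the one in `dftBallAvg` -/
def ep (d n : ℕ) (z : Fin d → ℤ) (y : Fin d → ℤ) : ℂ :=
  Complex.exp (-(2 * π * Complex.I) * (∑ i, (z i : ℝ) * (y i : ℝ)) / n)

def wf (d n : ℕ) (z : Fin d → ℤ) (i : Fin d) : ℂ :=
  Complex.exp (((-(2 * π * (z i : ℝ)) / n : ℝ) : ℂ) * Complex.I)

lemma exp_form (r : ℝ) (n : ℕ) :
    -(2 * (π:ℂ) * Complex.I) * (r : ℂ) / (n : ℂ) = ((-(2 * π * r) / n : ℝ) : ℂ) * Complex.I := by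
  push_cast
  ring

lemma ep_sum_cast (d n : ℕ) (z y : Fin d → ℤ) :
    ep d n z y = Complex.exp (((-(2 * π * (∑ i, (z i : ℝ) * (y i : ℝ))) / n : ℝ) : ℂ)
      * Complex.I) := by
  unfold ep
  rw [exp_form]

lemma abs_ep (d n : ℕ) (z y : Fin d → ℤ) : ‖ep d n z y‖ = 1 := by
  rw [ep_sum_cast]
  exact Complex.norm_exp_ofReal_mul_I _

lemma abs_wf (d n : ℕ) (z : Fin d → ℤ) (i : Fin d) : ‖wf d n z i‖ = 1 :=
  Complex.norm_exp_ofReal_mul_I _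

lemma wf_ne_zero (d n : ℕ) (z : Fin d → ℤ) (i : Fin d) : wf d n z i ≠ 0 :=
  Complex.exp_ne_zero _

lemma sum_shift_ev (d : ℕ) (z y : Fin d → ℤ) (i : Fin d) :
    (∑ j, (z j : ℝ) * (((y + evZ d i) j : ℤ) : ℝ))
      = (∑ j, (z j : ℝ) * ((y j : ℤ) : ℝ)) + (z i : ℝ) := by
  have h : ∀ j, (z j : ℝ) * (((y + evZ d i) j : ℤ) : ℝ)
      = (z j : ℝ) * ((y j : ℤ) : ℝ) + (if j = i then (z j : ℝ) else 0) := by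
    intro j
    simp only [Pi.add_apply, evZ]
    by_cases hj : j = i <;> simp [hj] <;> push_cast <;> ring
  rw [Finset.sum_congr rfl (fun j _ => h j), Finset.sum_add_distrib,
    Finset.sum_ite_eq' univ i (fun j => (z j : ℝ))]
  simp

lemma sum_shift_pv (d n : ℕ) (z y : Fin d → ℤ) (i : Fin d) :
    (∑ j, (z j : ℝ) * (((y + pvZ d n i) j : ℤ) : ℝ))
      = (∑ j, (z j : ℝ) * ((y j : ℤ) : ℝ)) + (z i : ℝ) * (n : ℝ) := by
  have h : ∀ j, (z j : ℝ) * (((y + pvZ d n i) j : ℤ) : ℝ)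
      = (z j : ℝ) * ((y j : ℤ) : ℝ) + (if j = i then (z j : ℝ) * (n : ℝ) else 0) := by
    intro j
    simp only [Pi.add_apply, pvZ]
    by_cases hj : j = i <;> simp [hj] <;> push_cast <;> ring
  rw [Finset.sum_congr rfl (fun j _ => h j), Finset.sum_add_distrib,
    Finset.sum_ite_eq' univ i (fun j => (z j : ℝ) * (n : ℝ))]
  simp

lemma ep_add_single (d n : ℕ) (hn : 1 ≤ n) (z : Fin d → ℤ) (y : Fin d → ℤ) (i : Fin d) :
    ep d n z (y + evZ d i) = ep d n z y * wf d n z i := by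
  unfold ep wf
  rw [← Complex.exp_add]
  congr 1
  rw [sum_shift_ev d z y i]
  have hn0 : (n : ℂ) ≠ 0 := by
    simp only [ne_eq, Nat.cast_eq_zero]; omega
  push_cast
  field_simp
  ring

lemma ep_per (d n : ℕ) (hn : 1 ≤ n) (z : Fin d → ℤ) : PerZ n (ep d n z) := by
  intro y i
  unfold ep
  have hn0 : (n : ℂ) ≠ 0 := by
    simp only [ne_eq, Nat.cast_eq_zero]; omega
  rw [sum_shift_pv d n z y i]
  have hexp : -(2 * (π:ℂ) * Complex.I) * (((∑ j, (z j : ℝ) * ((y j : ℤ) : ℝ))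
      + (z i : ℝ) * (n : ℝ) : ℝ) : ℂ) / n
      = -(2 * (π:ℂ) * Complex.I) * (((∑ j, (z j : ℝ) * ((y j : ℤ) : ℝ) : ℝ)) : ℂ) / n
        + ((-(z i) : ℤ) : ℂ) * (2 * (π:ℂ) * Complex.I) := by
    push_cast
    field_simp
    ring
  rw [hexp, Complex.exp_add, Complex.exp_int_mul_two_pi_mul_I]
  simp

end Stmt12

namespace Stmt12

variable {d : ℕ}

lemma wf_lb (d n : ℕ) (hn : 1 ≤ n) (z : Fin d → ℤ) (i : Fin d)
    (hz : 2 * |(z i : ℝ)| ≤ (n : ℝ)) :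
    4 * |(z i : ℝ)| / n ≤ ‖1 - wf d n z i‖ := by
  have hπ := Real.pi_pos
  have hn0 : (0:ℝ) < (n:ℝ) := by positivity
  set θ : ℝ := -(2 * π * (z i : ℝ)) / n with hθ
  have habsθ : |θ| = 2 * π * |(z i : ℝ)| / n := by
    rw [hθ, abs_div, abs_neg, abs_of_pos hn0, abs_mul, abs_of_pos (by positivity : (0:ℝ) < 2 * π)]
  have hθπ : |θ| ≤ π := by
    rw [habsθ]
    rw [div_le_iff₀ hn0]
    calc 2 * π * |(z i : ℝ)| = π * (2 * |(z i : ℝ)|) := by ring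
      _ ≤ π * n := by exact mul_le_mul_of_nonneg_left hz hπ.le
  have hident : (1:ℂ) - wf d n z i
      = ((1 - Real.cos θ : ℝ) : ℂ) + ((-Real.sin θ : ℝ) : ℂ) * Complex.I := by
    unfold wf
    rw [← hθ, Complex.exp_mul_I, ← Complex.ofReal_cos, ← Complex.ofReal_sin]
    push_cast
    ring
  rw [hident, Complex.norm_add_mul_I]
  rw [Real.le_sqrt (by positivity) (by positivity)]
  -- key facts
  have hcos1 : Real.cos θ ≤ 1 := Real.cos_le_one θ
  have hs2 : Real.sin θ ^ 2 = 1 - Real.cos θ ^ 2 := Real.sin_sq θ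
  have hhalf : Real.sin (θ / 2) ^ 2 = (1 - Real.cos θ) / 2 := by
    have h1 := Real.abs_sin_half θ
    have h2 : |Real.sin (θ/2)| ^ 2 = (1 - Real.cos θ) / 2 := by
      rw [h1, Real.sq_sqrt (by linarith)]
    rw [← sq_abs]
    exact h2
  have hsineq : |θ| / π ≤ |Real.sin (θ / 2)| := by
    have hhalfeq : Real.sin (|θ| / 2) = |Real.sin (θ / 2)| := by
      rcases abs_cases θ with ⟨he, hpos⟩ | ⟨he, hneg⟩
      · rw [he, abs_of_nonneg (Real.sin_nonneg_of_nonneg_of_le_pi (by linarith) (by linarith))]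
      · rw [he, abs_of_nonpos (Real.sin_nonpos_of_nonpos_of_neg_pi_le (by linarith)
          (by
            have : |θ| ≤ π := hθπ
            rw [he] at this
            linarith))]
        rw [show (-θ)/2 = -(θ/2) by ring, Real.sin_neg]
    have := Real.mul_le_sin (x := |θ| / 2) (by positivity) (by linarith)
    rw [hhalfeq] at this
    calc |θ| / π = 2 / π * (|θ| / 2) := by field_simp
      _ ≤ |Real.sin (θ / 2)| := this
  have hsin2 : (|θ| / π) ^ 2 ≤ Real.sin (θ / 2) ^ 2 := by
    rw [← sq_abs (Real.sin (θ/2))]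
    exact pow_le_pow_left₀ (by positivity) hsineq 2
  have hgoal2 : (4 * |(z i : ℝ)| / n) ^ 2 = 4 * (|θ| / π) ^ 2 := by
    rw [habsθ]
    field_simp
    ring
  rw [hgoal2]
  have hexp : (1 - Real.cos θ) ^ 2 + (-Real.sin θ) ^ 2 = 4 * Real.sin (θ/2) ^ 2 := by
    have : (-Real.sin θ) ^ 2 = Real.sin θ ^ 2 := by ring
    rw [this, hs2, hhalf]
    ring
  rw [hexp]
  linarith [hsin2]

lemma wf_ne_one (d n : ℕ) (hn : 1 ≤ n) (z : Fin d → ℤ) (i : Fin d)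
    (hz : 2 * |(z i : ℝ)| ≤ (n : ℝ)) (hzi : z i ≠ 0) : wf d n z i ≠ 1 := by
  intro hcon
  have h1 := wf_lb d n hn z i hz
  rw [hcon] at h1
  simp only [sub_self, norm_zero] at h1
  have hz0 : (0:ℝ) < |(z i : ℝ)| := by
    simp only [abs_pos, ne_eq, Int.cast_eq_zero]
    exact hzi
  have : (0:ℝ) < 4 * |(z i : ℝ)| / n := by positivity
  linarith

end Stmt12

namespace Stmt12

variable {d : ℕ}

lemma shift_inv (n : ℕ) (hn : 1 ≤ n) (A : Fin d → Finset ℤ) (i : Fin d) (a : ℤ)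
    (hA : A i = Finset.Icc a (a + n - 1)) (H : (Fin d → ℤ) → ℂ)
    (hH : ∀ y, H (y + pvZ d n i) = H y) :
    ∑ y ∈ Fintype.piFinset A, H (y + evZ d i) = ∑ y ∈ Fintype.piFinset A, H y := by
  refine Finset.sum_nbij'
    (i := fun y => Function.update y i (if y i = a + (n:ℤ) - 1 then a else y i + 1))
    (j := fun y => Function.update y i (if y i = a then a + (n:ℤ) - 1 else y i - 1))
    ?_ ?_ ?_ ?_ ?_
  · intro y hy
    rw [Fintype.mem_piFinset] at hy ⊢
    intro j
    rcases eq_or_ne j i with rfl | hj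
    · have hyj := hy j
      rw [hA, Finset.mem_Icc] at hyj
      beta_reduce
      rw [Function.update_self, hA, Finset.mem_Icc]
      split <;> omega
    · beta_reduce
      rw [Function.update_of_ne hj]
      exact hy j
  · intro y hy
    rw [Fintype.mem_piFinset] at hy ⊢
    intro j
    rcases eq_or_ne j i with rfl | hj
    · have hyj := hy j
      rw [hA, Finset.mem_Icc] at hyj
      beta_reduce
      rw [Function.update_self, hA, Finset.mem_Icc]
      split <;> omega
    · beta_reduce
      rw [Function.update_of_ne hj]
      exact hy j
  · intro y hy
    rw [Fintype.mem_piFinset] at hy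
    have hyi := hy i
    rw [hA, Finset.mem_Icc] at hyi
    beta_reduce
    funext j
    rcases eq_or_ne j i with rfl | hj
    · rw [Function.update_self, Function.update_self]
      split_ifs <;> omega
    · rw [Function.update_of_ne hj, Function.update_of_ne hj]
  · intro y hy
    rw [Fintype.mem_piFinset] at hy
    have hyi := hy i
    rw [hA, Finset.mem_Icc] at hyi
    beta_reduce
    funext j
    rcases eq_or_ne j i with rfl | hj
    · rw [Function.update_self, Function.update_self]
      split_ifs <;> omega
    · rw [Function.update_of_ne hj, Function.update_of_ne hj]
  · intro y hy
    rw [Fintype.mem_piFinset] at hy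
    have hyi := hy i
    rw [hA, Finset.mem_Icc] at hyi
    beta_reduce
    by_cases hc : y i = a + (n:ℤ) - 1
    · have e1 : y + evZ d i = Function.update y i a + pvZ d n i := by
        funext j
        rcases eq_or_ne j i with rfl | hj
        · simp [evZ, pvZ]
          omega
        · simp [evZ, pvZ, Function.update_of_ne hj, hj]
      have e2 : Function.update y i (if y i = a + (n:ℤ) - 1 then a else y i + 1)
          = Function.update y i a := by
        funext j
        rcases eq_or_ne j i with rfl | hj
        · rw [Function.update_self, Function.update_self, if_pos hc]
        · rw [Function.update_of_ne hj, Function.update_of_ne hj]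
      rw [e1, hH, e2]
    · have e1 : y + evZ d i = Function.update y i (y i + 1) := by
        funext j
        rcases eq_or_ne j i with rfl | hj
        · simp [evZ]
        · simp [evZ, Function.update_of_ne hj, hj]
      have e2 : Function.update y i (if y i = a + (n:ℤ) - 1 then a else y i + 1)
          = Function.update y i (y i + 1) := by
        funext j
        rcases eq_or_ne j i with rfl | hj
        · rw [Function.update_self, Function.update_self, if_neg hc]
        · rw [Function.update_of_ne hj, Function.update_of_ne hj]
      rw [e1, e2]

lemma sbp_once (n : ℕ) (hn : 1 ≤ n) (z : Fin d → ℤ) (A : Fin d → Finset ℤ) (i : Fin d)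
    (a : ℤ) (hA : A i = Finset.Icc a (a + n - 1)) (f : (Fin d → ℤ) → ℂ) (hf : PerZ n f)
    (hw : wf d n z i ≠ 1) :
    ‖∑ y ∈ Fintype.piFinset A, f y * ep d n z y‖
      ≤ ‖1 - wf d n z i‖⁻¹
        * ‖∑ y ∈ Fintype.piFinset A, (f (y + evZ d i) - f y) * ep d n z y‖ := by
  set w := wf d n z i with hwdef
  set S := ∑ y ∈ Fintype.piFinset A, f y * ep d n z y with hS
  have hshift : ∑ y ∈ Fintype.piFinset A, f (y + evZ d i) * ep d n z (y + evZ d i) = S := by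
    exact shift_inv n hn A i a hA (fun y => f y * ep d n z y)
      (fun y => by beta_reduce; rw [hf, ep_per d n hn z])
  have h2 : ∑ y ∈ Fintype.piFinset A, f (y + evZ d i) * ep d n z (y + evZ d i)
      = (∑ y ∈ Fintype.piFinset A, f (y + evZ d i) * ep d n z y) * w := by
    rw [Finset.sum_mul]
    apply Finset.sum_congr rfl
    intro y _
    rw [ep_add_single d n hn z y i, ← hwdef]
    ring
  have hw0 : w ≠ 0 := wf_ne_zero d n z i
  have h3 : ∑ y ∈ Fintype.piFinset A, f (y + evZ d i) * ep d n z y = S * w⁻¹ := by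
    rw [h2] at hshift
    field_simp at hshift ⊢
    linear_combination hshift
  have h4 : ∑ y ∈ Fintype.piFinset A, (f (y + evZ d i) - f y) * ep d n z y
      = S * (w⁻¹ - 1) := by
    have : ∀ y, (f (y + evZ d i) - f y) * ep d n z y
        = f (y + evZ d i) * ep d n z y - f y * ep d n z y := fun y => by ring
    rw [Finset.sum_congr rfl (fun y _ => this y), Finset.sum_sub_distrib, h3, ← hS]
    ring
  have h5 : ‖w⁻¹ - 1‖ = ‖1 - w‖ := by
    have : w⁻¹ - 1 = w⁻¹ * (1 - w) := by field_simp
    rw [this, norm_mul, norm_inv]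
    have : ‖w‖ = 1 := by rw [hwdef, abs_wf]
    rw [this]
    norm_num
  have h6 : ‖1 - w‖ ≠ 0 := by
    simp only [ne_eq, norm_eq_zero, sub_eq_zero]
    exact fun hc => hw hc.symm
  rw [h4, norm_mul, h5]
  rw [← mul_assoc, mul_comm ‖1 - w‖⁻¹, mul_assoc, inv_mul_cancel₀ h6, mul_one]

lemma iter_sbp (n : ℕ) (hn : 1 ≤ n) (z : Fin d → ℤ) (A : Fin d → Finset ℤ) :
    ∀ (l : List (Fin d)),
      (∀ i ∈ l, (∃ a : ℤ, A i = Finset.Icc a (a + n - 1)) ∧ wf d n z i ≠ 1) →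
      ∀ f : (Fin d → ℤ) → ℂ, PerZ n f →
      ∃ m : List (Fin d), m.length = l.length ∧
        ‖∑ y ∈ Fintype.piFinset A, f y * ep d n z y‖
          ≤ (l.map fun i => ‖1 - wf d n z i‖⁻¹).prod
            * ‖∑ y ∈ Fintype.piFinset A, dzl d m f y * ep d n z y‖ := by
  intro l
  induction l with
  | nil =>
    intro _ f _
    exact ⟨[], rfl, by simp [dzl]⟩
  | cons i t ih =>
    intro hl f hf
    obtain ⟨⟨a, ha⟩, hw⟩ := hl i (List.mem_cons_self)
    have step := sbp_once n hn z A i a ha f hf hw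
    obtain ⟨m', hm'len, hm'⟩ := ih (fun j hj => hl j (List.mem_cons_of_mem i hj))
      (fun y => f (y + evZ d i) - f y)
      (fun y j => by
        simp only
        rw [add_right_comm, hf, hf])
    refine ⟨m' ++ [i], by simp [hm'len], ?_⟩
    rw [dzl_append]
    calc ‖∑ y ∈ Fintype.piFinset A, f y * ep d n z y‖
        ≤ ‖1 - wf d n z i‖⁻¹
          * ‖∑ y ∈ Fintype.piFinset A, (f (y + evZ d i) - f y) * ep d n z y‖ := step
      _ ≤ ‖1 - wf d n z i‖⁻¹ * ((t.map fun j => ‖1 - wf d n z j‖⁻¹).prod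
          * ‖∑ y ∈ Fintype.piFinset A,
              dzl d m' (fun y => f (y + evZ d i) - f y) y * ep d n z y‖) := by
          exact mul_le_mul_of_nonneg_left hm' (by positivity)
      _ = ((i :: t).map fun j => ‖1 - wf d n z j‖⁻¹).prod
          * ‖∑ y ∈ Fintype.piFinset A,
              dzl d m' (fun y => f (y + evZ d i) - f y) y * ep d n z y‖ := by
          simp [mul_assoc]

lemma sum_bound (n : ℕ) (z : Fin d → ℤ) (A : Fin d → Finset ℤ) (f : (Fin d → ℤ) → ℂ)
    (B : ℝ) (hB : 0 ≤ B) (hf : ∀ y, ‖f y‖ ≤ B) :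
    ‖∑ y ∈ Fintype.piFinset A, f y * ep d n z y‖ ≤ (∏ i, ((A i).card : ℝ)) * B := by
  refine (norm_sum_le _ _).trans ?_
  have hterm : ∀ y, ‖f y * ep d n z y‖ ≤ B := by
    intro y
    rw [norm_mul]
    have : ‖ep d n z y‖ = 1 := by rw [abs_ep]
    rw [this, mul_one]
    exact hf y
  refine (Finset.sum_le_card_nsmul _ _ B (fun y _ => hterm y)).trans ?_
  rw [nsmul_eq_mul, Fintype.card_piFinset]
  rw [Nat.cast_prod]

end Stmt12

namespace Stmt12

variable {d : ℕ}

/-- the function `y ↦ T_n(y/n)` as a complex-valued function on `ℤ^d` -/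
def Ff (u : (Fin d → ℝ) → ℝ) (n : ℕ) : (Fin d → ℤ) → ℂ :=
  fun y => ((ballAvg u n (fun i => (y i : ℝ) / n)) : ℂ)

lemma Ff_dzl (u : (Fin d → ℝ) → ℝ) (hu : ContDiff ℝ (⊤ : ℕ∞) u) (n : ℕ) (hn : 1 ≤ n)
    (l : List (Fin d)) :
    ∀ y, dzl d l (Ff u n) y = ((ballAvg (dl n l u) n (fun i => (y i : ℝ) / n)) : ℂ) := by
  have hn0 : ((n:ℝ)) ≠ 0 := by positivity
  induction l with
  | nil => intro y; rfl
  | cons i t ih =>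
    intro y
    show dzl d t (Ff u n) (y + evZ d i) - dzl d t (Ff u n) y = _
    rw [ih, ih]
    have harg : (fun j => (((y + evZ d i) j : ℤ) : ℝ) / n)
        = (fun j => ((y j : ℤ) : ℝ) / n) + (n:ℝ)⁻¹ • uv d i := by
      funext j
      rcases eq_or_ne j i with rfl | hj
      · simp only [Pi.add_apply, evZ, Pi.smul_apply, uv, if_pos rfl, smul_eq_mul, mul_one]
        push_cast
        field_simp
      · simp only [Pi.add_apply, evZ, Pi.smul_apply, uv, if_neg hj, smul_eq_mul, mul_zero,
          add_zero]
    rw [harg, ballAvg_shift]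
    have hcont : Continuous (dl n t u) := (dl_contDiff n t u hu).continuous
    have hcont2 : Continuous (fun w => dl n t u (w + (n:ℝ)⁻¹ • uv d i)) :=
      hcont.comp (continuous_id.add continuous_const)
    rw [show (ballAvg (dl n (i :: t) u) n (fun j => ((y j : ℤ) : ℝ) / n))
        = ballAvg (fun w => dl n t u (w + (n:ℝ)⁻¹ • uv d i) - dl n t u w) n
          (fun j => ((y j : ℤ) : ℝ) / n) from rfl]
    rw [ballAvg_sub _ _ hcont2 hcont]
    push_cast
    ring

lemma Ff_per (u : (Fin d → ℝ) → ℝ) (hper : PerR u) (n : ℕ) (hn : 1 ≤ n) :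
    PerZ n (Ff u n) := by
  have hn0 : ((n:ℝ)) ≠ 0 := by positivity
  intro y i
  show ((ballAvg u n (fun j => (((y + pvZ d n i) j : ℤ) : ℝ) / n)) : ℂ) = _
  have harg : (fun j => (((y + pvZ d n i) j : ℤ) : ℝ) / n)
      = (fun j => ((y j : ℤ) : ℝ) / n) + uv d i := by
    funext j
    rcases eq_or_ne j i with rfl | hj
    · simp only [Pi.add_apply, pvZ, uv, if_pos rfl]
      push_cast
      field_simp
    · simp only [Pi.add_apply, pvZ, uv, if_neg hj, add_zero]
  rw [harg, ballAvg_shift]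
  congr 2
  funext w
  exact hper w i

/-- the elementary sum `∑ 1/(16 t²) ≤ 2` over a symmetric integer interval -/
lemma psum_le (h : ℤ) (h0 : 0 ≤ h) :
    ∑ t ∈ Finset.Icc (-h) h, (if t = 0 then (1:ℝ) else 1 / (16 * (t:ℝ)^2)) ≤ 2 := by
  have main : ∀ (N : ℕ),
      ∑ t ∈ Finset.Icc (-(N:ℤ)) (N:ℤ), (if t = 0 then (1:ℝ) else 1 / (16 * (t:ℝ)^2))
        ≤ 2 - 1 / ((N:ℝ) + 1) := by
    intro N
    induction N with
    | zero => norm_num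
    | succ N ih =>
      have hins : Finset.Icc (-((N+1 : ℕ):ℤ)) ((N+1 : ℕ):ℤ)
          = insert (-((N:ℤ)+1)) (insert ((N:ℤ)+1) (Finset.Icc (-(N:ℤ)) (N:ℤ))) := by
        ext t
        simp only [Finset.mem_Icc, Finset.mem_insert]
        omega
      rw [hins, Finset.sum_insert, Finset.sum_insert]
      · have hx0 : (0:ℝ) ≤ (N:ℝ) := by positivity
        rw [if_neg (by omega), if_neg (by omega)]
        have harith : 2 / (16 * ((N:ℝ)+1)^2) ≤ 1 / ((N:ℝ)+1) - 1 / ((N:ℝ)+2) := by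
          rw [div_sub_div _ _ (by positivity) (by positivity), div_le_div_iff₀ (by positivity)
            (by positivity)]
          nlinarith [hx0]
        push_cast
        rw [neg_sq]
        have h2 : ((N:ℝ) + 1 + 1) = (N:ℝ) + 2 := by ring
        rw [h2]
        have hA : (0:ℝ) < 16 * ((N:ℝ)+1)^2 := by positivity
        have e1 : 1 / (16 * ((N:ℝ)+1)^2) + 1 / (16 * ((N:ℝ)+1)^2)
            = 2 / (16 * ((N:ℝ)+1)^2) := by ring
        linarith [ih, harith, e1]
      · simp only [Finset.mem_Icc]
        omega
      · simp only [Finset.mem_insert, Finset.mem_Icc]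
        omega
  have hN := main h.toNat
  have hcast : ((h.toNat : ℤ)) = h := Int.toNat_of_nonneg h0
  rw [hcast] at hN
  have hpos : (0:ℝ) < (h.toNat:ℝ) + 1 := by positivity
  have h1 : 0 < 1 / ((h.toNat:ℝ)+1) := by positivity
  linarith

end Stmt12

open Stmt12

/-- for `u ∈ C^∞(𝕋^d)` with zero average, for all `n` large enough,
`n^d ∑_{z ∈ ℤ_n^d} |𝒯̂_n(z)| ≤ M` for some constant `M = M(d,u)`. -/
theorem stmt12 (d : ℕ) (hd : 1 ≤ d) (u : (Fin d → ℝ) → ℝ)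
    (hper : ∀ (x : Fin d → ℝ) (i : Fin d),
      u (x + fun j => if j = i then 1 else 0) = u x)
    (hu : ContDiff ℝ (⊤ : ℕ∞) u)
    (hzero : ∫ x in Set.Icc (fun _ => -(1/2) : Fin d → ℝ) (fun _ => 1/2), u x = 0) :
    ∃ M : ℝ, ∃ N : ℕ, ∀ n : ℕ, N ≤ n →
      (n : ℝ) ^ d * ∑ z ∈ discTorus d n, ‖dftBallAvg u n z‖ ≤ M := by
  classical
  have hperR : PerR u := hper
  choose Cf hCf0 hCf using fun k => diff_bound d k ℝ u hu hperR
  set Cu : ℝ := ∑ k ∈ Finset.range (2 * d + 1), Cf k with hCudef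
  have hCu0 : 0 ≤ Cu := Finset.sum_nonneg fun k _ => hCf0 k
  have hkey : ∀ (n : ℕ), 1 ≤ n → ∀ (l : List (Fin d)), l.length ≤ 2 * d → ∀ x,
      ‖dl n l u x‖ ≤ Cu / (n : ℝ) ^ l.length := by
    intro n hn l hl x
    refine (hCf l.length n hn l rfl x).trans ?_
    have hle : Cf l.length ≤ Cu :=
      Finset.single_le_sum (f := Cf) (fun j _ => hCf0 j) (Finset.mem_range.2 (by omega))
    gcongr
  refine ⟨Cu * 4 ^ d, 1, ?_⟩
  intro n hn1
  have hnR : (0:ℝ) < (n : ℝ) := by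
    have : 0 < n := hn1
    exact_mod_cast this
  have hndR : (0:ℝ) < (n : ℝ) ^ d := by positivity
  set h : ℤ := (n : ℤ) / 2 with hhdef
  have hh0 : 0 ≤ h := by omega
  have hh1 : 2 * h ≤ (n : ℤ) := by omega
  have hh2 : (n : ℤ) ≤ 2 * h + 1 := by omega
  set Afree : Finset ℤ := Finset.Icc (-h) (-h + n - 1) with hAfreedef
  set Afroz : Finset ℤ := Finset.Icc ((n : ℤ) - h) h with hAfrozdef
  set AS : Finset (Fin d) → Fin d → Finset ℤ :=
    fun S i => if i ∈ S then Afroz else Afree with hASdef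
  set q : ℤ → ℝ := fun t => if t = 0 then (n : ℝ) else (n : ℝ) / (16 * (t : ℝ) ^ 2) with hqdef
  have hq0 : ∀ t, 0 ≤ q t := by
    intro t
    simp only [hqdef]
    split <;> positivity
  have hcard_free : ((Afree.card : ℕ) : ℝ) = (n : ℝ) := by
    simp only [hAfreedef, Int.card_Icc]
    have e : (-h + (n:ℤ) - 1 + 1 - -h) = (n : ℤ) := by ring
    rw [e]
    simp
  have hcard_froz : ((Afroz.card : ℕ) : ℝ) ≤ 1 := by
    simp only [hAfrozdef, Int.card_Icc]
    have e : (h + 1 - ((n:ℤ) - h)).toNat ≤ 1 := by omega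
    exact_mod_cast e
  have hzb : ∀ z ∈ discTorus d n, ∀ i, -h ≤ z i ∧ z i ≤ h := by
    intro z hz i
    rw [discTorus, Finset.mem_Icc] at hz
    exact ⟨hz.1 i, hz.2 i⟩
  -- FACE BOUND
  have hface : ∀ z ∈ discTorus d n, ∀ S : Finset (Fin d),
      ‖∑ y ∈ Fintype.piFinset (AS S), Ff u n y * ep d n z y‖
        ≤ Cu * ((n : ℝ) ^ d)⁻¹ * ∏ i ∈ univ \ S, q (z i) := by
    intro z hz S
    set r : Fin d → ℝ := fun i => ‖1 - wf d n z i‖⁻¹ with hrdef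
    have hr0 : ∀ i, 0 ≤ r i := fun i => inv_nonneg.2 (norm_nonneg _)
    set sfree : Finset (Fin d) := (univ \ S).filter (fun i => z i ≠ 0) with hsfdef
    set l : List (Fin d) := sfree.toList ++ sfree.toList with hldef
    have hsf : ∀ i ∈ sfree, i ∉ S ∧ z i ≠ 0 := by
      intro i hi
      rw [hsfdef, Finset.mem_filter, Finset.mem_sdiff] at hi
      exact ⟨hi.1.2, hi.2⟩
    have hzabs : ∀ i, 2 * |(z i : ℝ)| ≤ (n : ℝ) := by
      intro i
      have hb := hzb z hz i
      have hZ : 2 * |z i| ≤ (n : ℤ) := by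
        rcases abs_cases (z i) with ⟨he, _⟩ | ⟨he, _⟩ <;> omega
      calc 2 * |(z i : ℝ)| = ((2 * |z i| : ℤ) : ℝ) := by push_cast; ring
        _ ≤ (n : ℝ) := by exact_mod_cast hZ
    have hgood : ∀ i ∈ l, (∃ a : ℤ, AS S i = Finset.Icc a (a + n - 1)) ∧ wf d n z i ≠ 1 := by
      intro i hi
      have hi' : i ∈ sfree := by
        rcases List.mem_append.1 hi with h' | h' <;> exact Finset.mem_toList.1 h'
      obtain ⟨hiS, hiz⟩ := hsf i hi'
      refine ⟨⟨-h, ?_⟩, wf_ne_one d n hn1 z i (hzabs i) hiz⟩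
      simp only [hASdef, if_neg hiS, hAfreedef]
    obtain ⟨m, hmlen, hmle⟩ := iter_sbp n hn1 z (AS S) l hgood (Ff u n)
      (Ff_per u hperR n hn1)
    have hk : sfree.card ≤ d := by
      have := Finset.card_le_univ sfree
      simpa [Finset.card_univ, Fintype.card_fin] using this
    have hmlen2 : m.length = 2 * sfree.card := by
      rw [hmlen, hldef, List.length_append, Finset.length_toList]
      ring
    have hmled : m.length ≤ 2 * d := by omega
    have hFb : ∀ y, ‖dzl d m (Ff u n) y‖ ≤ (Cu / (n : ℝ) ^ m.length) * ((n : ℝ)⁻¹) ^ d := by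
      intro y
      rw [Ff_dzl u hu n hn1 m y]
      rw [Complex.norm_real]
      exact ballAvg_bound _ (dl_contDiff n m u hu).continuous _
        (fun x => hkey n hn1 m hmled x) n hn1 _
    have hcrude := sum_bound n z (AS S) (dzl d m (Ff u n))
      ((Cu / (n : ℝ) ^ m.length) * ((n : ℝ)⁻¹) ^ d) (by positivity) hFb
    have hprod0 : (0:ℝ) ≤ (l.map fun i => ‖1 - wf d n z i‖⁻¹).prod := by
      apply List.prod_nonneg
      intro x hx
      obtain ⟨i, _, rfl⟩ := List.mem_map.1 hx
      exact inv_nonneg.2 (norm_nonneg _)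
    have h1 : ‖∑ y ∈ Fintype.piFinset (AS S), Ff u n y * ep d n z y‖
        ≤ (l.map fun i => ‖1 - wf d n z i‖⁻¹).prod
          * ((∏ i, ((AS S i).card : ℝ)) * ((Cu / (n : ℝ) ^ m.length) * ((n : ℝ)⁻¹) ^ d)) :=
      hmle.trans (mul_le_mul_of_nonneg_left hcrude hprod0)
    -- list product = finset product of squares
    have hP1 : (l.map fun i => ‖1 - wf d n z i‖⁻¹).prod = ∏ i ∈ sfree, (r i) ^ 2 := by
      rw [hldef, List.map_append, List.prod_append, Finset.prod_map_toList]
      rw [← Finset.prod_mul_distrib]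
      apply Finset.prod_congr rfl
      intro i _
      rw [hrdef]
      ring
    -- product of cards bound
    have hP2 : (∏ i, ((AS S i).card : ℝ)) ≤ ∏ i ∈ univ \ S, (n : ℝ) := by
      rw [← Finset.prod_sdiff (Finset.subset_univ S)]
      have e1 : ∏ i ∈ univ \ S, ((AS S i).card : ℝ) = ∏ _i ∈ univ \ S, (n : ℝ) := by
        apply Finset.prod_congr rfl
        intro i hi
        simp only [hASdef, if_neg (Finset.mem_sdiff.1 hi).2]
        exact hcard_free
      have e2 : ∏ i ∈ S, ((AS S i).card : ℝ) ≤ ∏ _i ∈ S, (1:ℝ) := by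
        apply Finset.prod_le_prod (fun i _ => Nat.cast_nonneg _)
        intro i hi
        simp only [hASdef, if_pos hi]
        exact hcard_froz
      calc (∏ i ∈ univ \ S, ((AS S i).card : ℝ)) * ∏ i ∈ S, ((AS S i).card : ℝ)
          ≤ (∏ i ∈ univ \ S, ((AS S i).card : ℝ)) * ∏ _i ∈ S, (1:ℝ) := by
            exact mul_le_mul_of_nonneg_left e2
              (Finset.prod_nonneg (fun i _ => Nat.cast_nonneg _))
        _ = ∏ i ∈ univ \ S, (n : ℝ) := by rw [Finset.prod_const_one, mul_one, e1]
    -- per-element bound on sfree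
    have hrq : ∀ i ∈ sfree, (r i) ^ 2 * ((n:ℝ) * (((n:ℝ) ^ 2)⁻¹)) ≤ q (z i) := by
      intro i hi
      obtain ⟨hiS, hiz⟩ := hsf i hi
      have hzpos : (0:ℝ) < |(z i : ℝ)| := by
        simp only [abs_pos, ne_eq, Int.cast_eq_zero]
        exact hiz
      have hlb := wf_lb d n hn1 z i (hzabs i)
      have hlbpos : (0:ℝ) < 4 * |(z i : ℝ)| / n := by positivity
      have hrle : r i ≤ (n:ℝ) / (4 * |(z i : ℝ)|) := by
        rw [hrdef]
        simp only
        calc ‖1 - wf d n z i‖⁻¹ ≤ (4 * |(z i : ℝ)| / n)⁻¹ := by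
              exact inv_anti₀ hlbpos hlb
          _ = (n:ℝ) / (4 * |(z i : ℝ)|) := by rw [inv_div]
      have hr2 : (r i) ^ 2 ≤ ((n:ℝ) / (4 * |(z i : ℝ)|)) ^ 2 :=
        pow_le_pow_left₀ (hr0 i) hrle 2
      have hq : q (z i) = (n:ℝ) / (16 * ((z i : ℝ)) ^ 2) := by
        simp only [hqdef, if_neg hiz]
      rw [hq]
      have hsq : ((n:ℝ) / (4 * |(z i : ℝ)|)) ^ 2 = (n:ℝ)^2 / (16 * ((z i : ℝ))^2) := by
        rw [div_pow, mul_pow, sq_abs]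
        norm_num
      calc (r i) ^ 2 * ((n:ℝ) * (((n:ℝ) ^ 2)⁻¹))
          ≤ ((n:ℝ)^2 / (16 * ((z i : ℝ))^2)) * ((n:ℝ) * (((n:ℝ) ^ 2)⁻¹)) := by
            apply mul_le_mul_of_nonneg_right (hr2.trans (le_of_eq hsq)) (by positivity)
        _ = (n:ℝ) / (16 * ((z i : ℝ)) ^ 2) := by
            field_simp
    -- numeric core
    have hcore : (∏ i ∈ sfree, (r i) ^ 2) * (∏ i, ((AS S i).card : ℝ))
        * (((n:ℝ) ^ m.length)⁻¹) ≤ ∏ i ∈ univ \ S, q (z i) := by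
      have hinv : (((n:ℝ) ^ m.length)⁻¹) = ∏ _i ∈ sfree, (((n:ℝ) ^ 2)⁻¹) := by
        rw [hmlen2, Finset.prod_const, ← inv_pow, pow_mul, inv_pow]
      have hsplit := Finset.prod_filter_mul_prod_filter_not (univ \ S)
        (fun i => z i ≠ 0) (fun _ => (n:ℝ))
      have hsplitq := Finset.prod_filter_mul_prod_filter_not (univ \ S)
        (fun i => z i ≠ 0) (fun i => q (z i))
      calc (∏ i ∈ sfree, (r i) ^ 2) * (∏ i, ((AS S i).card : ℝ)) * (((n:ℝ) ^ m.length)⁻¹)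
          ≤ (∏ i ∈ sfree, (r i) ^ 2) * (∏ i ∈ univ \ S, (n:ℝ)) * (((n:ℝ) ^ m.length)⁻¹) := by
            have hrs : (0:ℝ) ≤ ∏ i ∈ sfree, (r i) ^ 2 :=
              Finset.prod_nonneg (fun i _ => by positivity)
            apply mul_le_mul_of_nonneg_right (mul_le_mul_of_nonneg_left hP2 hrs)
              (by positivity)
        _ = (∏ i ∈ sfree, ((r i) ^ 2 * ((n:ℝ) * (((n:ℝ) ^ 2)⁻¹))))
            * (∏ i ∈ (univ \ S).filter (fun i => ¬ z i ≠ 0), (n:ℝ)) := by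
            rw [← hsplit, ← hsfdef, hinv]
            rw [Finset.prod_mul_distrib, Finset.prod_mul_distrib]
            ring
        _ ≤ (∏ i ∈ sfree, q (z i)) * (∏ i ∈ (univ \ S).filter (fun i => ¬ z i ≠ 0), q (z i)) := by
            apply mul_le_mul
            · exact Finset.prod_le_prod (fun i _ => by positivity) hrq
            · apply Finset.prod_le_prod (fun i _ => by positivity)
              intro i hi
              have hz0 : z i = 0 := by
                have := (Finset.mem_filter.1 hi).2
                simpa using this
              simp only [hqdef, hz0, if_pos rfl]
              exact le_refl _
            · exact Finset.prod_nonneg (fun i _ => by positivity)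
            · exact Finset.prod_nonneg (fun i _ => hq0 _)
        _ = ∏ i ∈ univ \ S, q (z i) := by rw [← hsfdef] at hsplitq; exact hsplitq
    -- assemble
    refine h1.trans ?_
    have hrw : (l.map fun i => ‖1 - wf d n z i‖⁻¹).prod
        * ((∏ i, ((AS S i).card : ℝ)) * ((Cu / (n : ℝ) ^ m.length) * ((n : ℝ)⁻¹) ^ d))
        = (Cu * ((n : ℝ) ^ d)⁻¹)
          * ((∏ i ∈ sfree, (r i) ^ 2) * (∏ i, ((AS S i).card : ℝ))
            * (((n:ℝ) ^ m.length)⁻¹)) := by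
      rw [hP1, div_eq_mul_inv, inv_pow]
      ring
    rw [hrw]
    exact mul_le_mul_of_nonneg_left hcore (by positivity)
  -- DECOMPOSITION
  have hdec : ∀ z : Fin d → ℤ, ∑ y ∈ discTorus d n, Ff u n y * ep d n z y
      = ∑ S ∈ (univ : Finset (Fin d)).powerset,
          ∑ y ∈ Fintype.piFinset (AS S), Ff u n y * ep d n z y := by
    intro z
    rw [← Finset.sum_fiberwise_of_maps_to
      (g := fun y : Fin d → ℤ => univ.filter (fun i => (n:ℤ) - h ≤ y i))
      (fun y _ => Finset.mem_powerset.2 (Finset.filter_subset _ _))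
      (fun y => Ff u n y * ep d n z y)]
    apply Finset.sum_congr rfl
    intro S hS
    apply Finset.sum_congr ?_ (fun _ _ => rfl)
    ext y
    simp only [Finset.mem_filter, Fintype.mem_piFinset, discTorus, Finset.mem_Icc, Pi.le_def]
    constructor
    · rintro ⟨⟨hy1, hy2⟩, hfilt⟩
      intro i
      have hiff : i ∈ S ↔ (n:ℤ) - h ≤ y i := by
        rw [← hfilt]
        simp
      simp only [hASdef]
      split_ifs with hiS
      · rw [hAfrozdef, Finset.mem_Icc]
        exact ⟨hiff.1 hiS, hy2 i⟩
      · rw [hAfreedef, Finset.mem_Icc]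
        have hni : ¬ ((n:ℤ) - h ≤ y i) := fun hc => hiS (hiff.2 hc)
        constructor
        · exact hy1 i
        · omega
    · intro hy
      have hyi : ∀ i, (i ∈ S → (n:ℤ) - h ≤ y i ∧ y i ≤ h)
          ∧ (i ∉ S → -h ≤ y i ∧ y i ≤ -h + n - 1) := by
        intro i
        have := hy i
        simp only [hASdef] at this
        constructor
        · intro hiS
          rw [if_pos hiS, hAfrozdef, Finset.mem_Icc] at this
          exact this
        · intro hiS
          rw [if_neg hiS, hAfreedef, Finset.mem_Icc] at this
          exact this
      constructor
      · constructor <;> intro i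
        · by_cases hiS : i ∈ S
          · have := (hyi i).1 hiS
            omega
          · exact ((hyi i).2 hiS).1
        · by_cases hiS : i ∈ S
          · exact ((hyi i).1 hiS).2
          · have := (hyi i).2 hiS
            omega
      · ext i
        simp only [Finset.mem_filter, Finset.mem_univ, true_and]
        constructor
        · intro hle
          by_contra hiS
          have := (hyi i).2 hiS
          omega
        · intro hiS
          exact ((hyi i).1 hiS).1
  -- PER-Z BOUND
  have hperz : ∀ z ∈ discTorus d n, ‖dftBallAvg u n z‖
      ≤ ((n : ℝ) ^ d)⁻¹ * ∑ S ∈ (univ : Finset (Fin d)).powerset,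
          (Cu * ((n : ℝ) ^ d)⁻¹ * ∏ i ∈ univ \ S, q (z i)) := by
    intro z hz
    have hrepr : dftBallAvg u n z
        = ((n : ℂ) ^ d)⁻¹ * ∑ y ∈ discTorus d n, Ff u n y * ep d n z y := rfl
    rw [hrepr, norm_mul]
    have habs1 : ‖((n : ℂ) ^ d)⁻¹‖ = ((n : ℝ) ^ d)⁻¹ := by
      rw [norm_inv, norm_pow, Complex.norm_natCast]
    rw [habs1]
    apply mul_le_mul_of_nonneg_left ?_ (by positivity)
    rw [hdec z]
    refine (norm_sum_le _ _).trans ?_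
    exact Finset.sum_le_sum (fun S _ => hface z hz S)
  -- Z-SUM BOUND
  have hZsum : ∀ S : Finset (Fin d),
      ∑ z ∈ discTorus d n, ∏ i ∈ univ \ S, q (z i) ≤ (2 * (n : ℝ)) ^ d := by
    intro S
    have hext : ∀ z : Fin d → ℤ, ∏ i ∈ univ \ S, q (z i)
        = ∏ i : Fin d, (if i ∈ S then (1:ℝ) else q (z i)) := by
      intro z
      rw [← Finset.prod_sdiff (Finset.subset_univ S)]
      have e1 : ∏ i ∈ S, (if i ∈ S then (1:ℝ) else q (z i)) = 1 :=
        Finset.prod_eq_one (fun i hi => if_pos hi)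
      have e2 : ∏ i ∈ univ \ S, (if i ∈ S then (1:ℝ) else q (z i))
          = ∏ i ∈ univ \ S, q (z i) :=
        Finset.prod_congr rfl (fun i hi => if_neg (Finset.mem_sdiff.1 hi).2)
      rw [e1, e2, mul_one]
    rw [Finset.sum_congr rfl (fun z _ => hext z)]
    have hfact := Finset.prod_univ_sum (κ := fun _ : Fin d => ℤ)
      (fun _ => Finset.Icc (-h) h) (fun i t => if i ∈ S then (1:ℝ) else q t)
    rw [discTorus, Pi.Icc_eq, ← hhdef, ← hfact]
    have hcoord : ∀ i : Fin d,
        ∑ t ∈ Finset.Icc (-h) h, (if i ∈ S then (1:ℝ) else q t) ≤ 2 * (n : ℝ) := by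
      intro i
      by_cases hiS : i ∈ S
      · simp only [if_pos hiS, Finset.sum_const, nsmul_eq_mul, mul_one]
        rw [Int.card_Icc]
        have hc : (h + 1 - -h).toNat ≤ 2 * n := by omega
        calc ((h + 1 - -h).toNat : ℝ) ≤ ((2 * n : ℕ) : ℝ) := by exact_mod_cast hc
          _ = 2 * (n : ℝ) := by push_cast; ring
      · simp only [if_neg hiS]
        have hqn : ∀ t : ℤ, q t = (n : ℝ) * (if t = 0 then (1:ℝ) else 1 / (16 * (t:ℝ)^2)) := by
          intro t
          simp only [hqdef]
          split
          · rw [mul_one]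
          · rw [mul_one_div]
        rw [Finset.sum_congr rfl (fun t _ => hqn t), ← Finset.mul_sum]
        calc (n:ℝ) * ∑ t ∈ Finset.Icc (-h) h, (if t = 0 then (1:ℝ) else 1 / (16 * (t:ℝ)^2))
            ≤ (n:ℝ) * 2 := mul_le_mul_of_nonneg_left (psum_le h hh0) (le_of_lt hnR)
          _ = 2 * (n:ℝ) := by ring
    calc ∏ i : Fin d, ∑ t ∈ Finset.Icc (-h) h, (if i ∈ S then (1:ℝ) else q t)
        ≤ ∏ _i : Fin d, (2 * (n:ℝ)) := by
          apply Finset.prod_le_prod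
          · intro i _
            apply Finset.sum_nonneg
            intro t _
            split
            · norm_num
            · exact hq0 t
          · exact fun i _ => hcoord i
      _ = (2 * (n:ℝ)) ^ d := by
          rw [Finset.prod_const, Finset.card_univ, Fintype.card_fin]
  -- FINAL CHAIN
  calc (n : ℝ) ^ d * ∑ z ∈ discTorus d n, ‖dftBallAvg u n z‖
      ≤ (n : ℝ) ^ d * ∑ z ∈ discTorus d n, (((n : ℝ) ^ d)⁻¹
          * ∑ S ∈ (univ : Finset (Fin d)).powerset,
            (Cu * ((n : ℝ) ^ d)⁻¹ * ∏ i ∈ univ \ S, q (z i))) :=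
        mul_le_mul_of_nonneg_left (Finset.sum_le_sum hperz) (le_of_lt hndR)
    _ = ∑ z ∈ discTorus d n, ∑ S ∈ (univ : Finset (Fin d)).powerset,
          (Cu * ((n : ℝ) ^ d)⁻¹ * ∏ i ∈ univ \ S, q (z i)) := by
        rw [← Finset.mul_sum, ← mul_assoc, mul_inv_cancel₀ (ne_of_gt hndR), one_mul]
    _ = ∑ S ∈ (univ : Finset (Fin d)).powerset, ∑ z ∈ discTorus d n,
          (Cu * ((n : ℝ) ^ d)⁻¹ * ∏ i ∈ univ \ S, q (z i)) := Finset.sum_comm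
    _ ≤ ∑ _S ∈ (univ : Finset (Fin d)).powerset, (Cu * ((n : ℝ) ^ d)⁻¹ * (2 * (n:ℝ)) ^ d) := by
        refine Finset.sum_le_sum (fun S _ => ?_)
        rw [← Finset.mul_sum]
        exact mul_le_mul_of_nonneg_left (hZsum S) (by positivity)
    _ = (2 ^ d : ℕ) • (Cu * ((n : ℝ) ^ d)⁻¹ * (2 * (n:ℝ)) ^ d) := by
        rw [Finset.sum_const, Finset.card_powerset, Finset.card_univ, Fintype.card_fin]
    _ ≤ Cu * 4 ^ d := by
        rw [nsmul_eq_mul]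
        have hmain : ((n : ℝ) ^ d)⁻¹ * (2 * (n:ℝ)) ^ d = 2 ^ d := by
          rw [mul_pow, mul_comm ((2:ℝ)^d), ← mul_assoc, inv_mul_cancel₀ (ne_of_gt hndR),
            one_mul]
        have h4 : (4:ℝ) ^ d = 2 ^ d * 2 ^ d := by
          rw [← mul_pow]
          norm_num
        rw [mul_assoc Cu, hmain]
        push_cast
        rw [h4]
        ring_nf
        exact le_refl _
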